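/- Consider the preconditioned Fletcher–Reeves nonlinear CG iteration for a differentiable E : ℝⁿ → ℝ with symmetric positive definite preconditioner M, with nonzero gradients g^(k) = ∇E(f^(k)) at every iterate, and suppose every step length α_k satisfies the strong Wolfe conditions with constants 0 < c₁ < c₂ < 1/2. Define cos θ_M^(k) = −(g^(k)ᵀ p^(k)) / (‖g^(k)‖_{M⁻¹} ‖p^(k)‖_M). Then for all k ≥ 0, ((1 − 2c₂)/(1 − c₂)) · ‖g^(k)‖_{M⁻¹}/‖p^(k)‖_M ≤ cos θ_M^(k) ≤ (1/(1 − c₂)) · ‖g^(k)‖_{M⁻¹}/‖p^(k)‖_M. -/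

import Mathlib

open Matrix

/-!
Write `A_k = g⁽ᵏ⁾ᵀ M⁻¹ g⁽ᵏ⁾ > 0` and `r_k = g⁽ᵏ⁾ᵀ p⁽ᵏ⁾ / A_k`. The Fletcher–Reeves update gives
`r_{k+1} + 1 = g⁽ᵏ⁺¹⁾ᵀ p⁽ᵏ⁾ / A_k`, so the strong Wolfe curvature condition yields
`|r_{k+1} + 1| ≤ c₂ |r_k|` with `r_0 = -1`. By induction `|r_k + 1| ≤ c₂ / (1 - c₂)`, i.e.
`-g⁽ᵏ⁾ᵀ p⁽ᵏ⁾ / A_k` lies between `(1 - 2c₂)/(1 - c₂)` and `1/(1 - c₂)`, and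
`cos θ_M⁽ᵏ⁾ = (-g⁽ᵏ⁾ᵀ p⁽ᵏ⁾ / A_k) · √A_k / ‖p⁽ᵏ⁾‖_M`.
-/

theorem abs_add_one_le_of_abs_succ_add_one_le {r : ℕ → ℝ} {c : ℝ} (hc0 : 0 ≤ c) (hc1 : c < 1)
    (h0 : r 0 = -1) (hstep : ∀ k, |r (k + 1) + 1| ≤ c * |r k|) :
    ∀ k, |r k + 1| ≤ c / (1 - c) := by
  have h1c : 0 < 1 - c := by linarith
  intro k
  induction k with
  | zero => simp [h0, div_nonneg hc0 h1c.le]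
  | succ k ih =>
    have hr : |r k| ≤ 1 / (1 - c) := by
      calc |r k| = |(r k + 1) - 1| := by ring_nf
        _ ≤ |r k + 1| + |(1 : ℝ)| := abs_sub _ _
        _ ≤ c / (1 - c) + 1 := by rw [abs_one]; linarith
        _ = 1 / (1 - c) := by field_simp; ring
    calc |r (k + 1) + 1| ≤ c * |r k| := hstep k
      _ ≤ c * (1 / (1 - c)) := mul_le_mul_of_nonneg_left hr hc0
      _ = c / (1 - c) := by ring

theorem neg_mem_Icc_of_abs_add_one_le {t c : ℝ} (hc : c < 1) (h : |t + 1| ≤ c / (1 - c)) :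
    -t ∈ Set.Icc ((1 - 2 * c) / (1 - c)) (1 / (1 - c)) := by
  have h1c : 1 - c ≠ 0 := by linarith
  obtain ⟨hlo, hhi⟩ := abs_le.mp h
  have hlo' : (1 - 2 * c) / (1 - c) = 1 - c / (1 - c) := by field_simp; ring
  have hhi' : 1 / (1 - c) = 1 + c / (1 - c) := by field_simp; ring
  constructor <;> linarith

theorem div_sqrt_mul_sqrt_eq (a b c : ℝ) (ha : 0 ≤ a) :
    c / (√a * √b) = c / a * (√a / √b) := by
  rcases ha.eq_or_lt with rfl | ha
  · simp
  · have hsa : √a * √a = a := Real.mul_self_sqrt ha.le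
    field_simp
    rw [sq, hsa]

theorem fletcherReeves_ratio_succ {ι : Type*} [Fintype ι] (P : Matrix ι ι ℝ) (g g' p : ι → ℝ)
    (hg' : g' ⬝ᵥ P *ᵥ g' ≠ 0) :
    g' ⬝ᵥ (-(P *ᵥ g') + ((g' ⬝ᵥ P *ᵥ g') / (g ⬝ᵥ P *ᵥ g)) • p) / (g' ⬝ᵥ P *ᵥ g') + 1 =
      (g' ⬝ᵥ p) / (g ⬝ᵥ P *ᵥ g) := by
  rw [dotProduct_add, dotProduct_neg, dotProduct_smul, smul_eq_mul]
  field_simp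
  ring

theorem pcg_cos_theta_bounds_general
    (n : ℕ)
    (gradE : (Fin n → ℝ) → (Fin n → ℝ))
    (M : Matrix (Fin n) (Fin n) ℝ) (hM : M.PosDef)
    (f p : ℕ → (Fin n → ℝ)) (α : ℕ → ℝ)
    (c₁ c₂ : ℝ) (hc₁ : 0 < c₁) (hc₁₂ : c₁ < c₂) (hc₂ : c₂ < 1 / 2)
    (hgne : ∀ k, gradE (f k) ≠ 0)
    (hp0 : p 0 = -(M⁻¹.mulVec (gradE (f 0))))
    (hf : ∀ k, f (k + 1) = f k + α k • p k)
    (hpk : ∀ k, p (k + 1) =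
      -(M⁻¹.mulVec (gradE (f (k + 1)))) +
        ((gradE (f (k + 1)) ⬝ᵥ M⁻¹.mulVec (gradE (f (k + 1)))) /
          (gradE (f k) ⬝ᵥ M⁻¹.mulVec (gradE (f k)))) • p k)
    (hWolfe2 : ∀ k, |gradE (f k + α k • p k) ⬝ᵥ p k| ≤ c₂ * |gradE (f k) ⬝ᵥ p k|) :
    ∀ k,
      ((1 - 2 * c₂) / (1 - c₂)) *
          (Real.sqrt (gradE (f k) ⬝ᵥ M⁻¹.mulVec (gradE (f k))) /
            Real.sqrt (p k ⬝ᵥ M.mulVec (p k))) ≤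
        (-(gradE (f k) ⬝ᵥ p k)) /
          (Real.sqrt (gradE (f k) ⬝ᵥ M⁻¹.mulVec (gradE (f k))) *
            Real.sqrt (p k ⬝ᵥ M.mulVec (p k))) ∧
      (-(gradE (f k) ⬝ᵥ p k)) /
          (Real.sqrt (gradE (f k) ⬝ᵥ M⁻¹.mulVec (gradE (f k))) *
            Real.sqrt (p k ⬝ᵥ M.mulVec (p k))) ≤
        (1 / (1 - c₂)) *
          (Real.sqrt (gradE (f k) ⬝ᵥ M⁻¹.mulVec (gradE (f k))) /
            Real.sqrt (p k ⬝ᵥ M.mulVec (p k))) := by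
  have hA (k : ℕ) : 0 < gradE (f k) ⬝ᵥ M⁻¹ *ᵥ gradE (f k) :=
    hM.inv.dotProduct_mulVec_pos (hgne k)
  have hratio := abs_add_one_le_of_abs_succ_add_one_le
    (r := fun k ↦ (gradE (f k) ⬝ᵥ p k) / (gradE (f k) ⬝ᵥ M⁻¹ *ᵥ gradE (f k)))
    (by linarith) (by linarith) (by simp [hp0, neg_div, div_self (hA 0).ne']) fun k ↦ by
      rw [hpk k, fletcherReeves_ratio_succ _ _ _ _ (hA (k + 1)).ne', abs_div, abs_div,
        abs_of_pos (hA k), ← mul_div_assoc, hf k]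
      exact div_le_div_of_nonneg_right (hWolfe2 k) (hA k).le
  intro k
  have hcos := neg_mem_Icc_of_abs_add_one_le (by linarith) (hratio k)
  have hsqrt : 0 ≤ √(gradE (f k) ⬝ᵥ M⁻¹ *ᵥ gradE (f k)) / √(p k ⬝ᵥ M *ᵥ p k) := by positivity
  rw [div_sqrt_mul_sqrt_eq _ _ _ (hA k).le, neg_div]
  exact ⟨mul_le_mul_of_nonneg_right hcos.1 hsqrt, mul_le_mul_of_nonneg_right hcos.2 hsqrt⟩

/-- The two-sided bound (eq. (5.2)) in the proof of Theorem 5.6: under strong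
Wolfe step lengths with `0 < c₁ < c₂ < 1/2`,
`((1−2c₂)/(1−c₂))·‖g⁽ᵏ⁾‖_{M⁻¹}/‖p⁽ᵏ⁾‖_M ≤ cos θ_M⁽ᵏ⁾ ≤ (1/(1−c₂))·‖g⁽ᵏ⁾‖_{M⁻¹}/‖p⁽ᵏ⁾‖_M`. -/
theorem pcg_cos_theta_bounds
    (n : ℕ) (hn : 1 ≤ n)
    (E : (Fin n → ℝ) → ℝ) (gradE : (Fin n → ℝ) → (Fin n → ℝ))
    (hdiff : Differentiable ℝ E)
    (hgrad : ∀ x v, fderiv ℝ E x v = gradE x ⬝ᵥ v)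
    (M : Matrix (Fin n) (Fin n) ℝ) (hM : M.PosDef)
    (f p : ℕ → (Fin n → ℝ)) (α : ℕ → ℝ)
    (c₁ c₂ : ℝ) (hc₁ : 0 < c₁) (hc₁₂ : c₁ < c₂) (hc₂ : c₂ < 1 / 2)
    (hgne : ∀ k, gradE (f k) ≠ 0)
    (hα : ∀ k, 0 < α k)
    (hp0 : p 0 = -(M⁻¹.mulVec (gradE (f 0))))
    (hf : ∀ k, f (k + 1) = f k + α k • p k)
    (hpk : ∀ k, p (k + 1) =
      -(M⁻¹.mulVec (gradE (f (k + 1)))) +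
        ((gradE (f (k + 1)) ⬝ᵥ M⁻¹.mulVec (gradE (f (k + 1)))) /
          (gradE (f k) ⬝ᵥ M⁻¹.mulVec (gradE (f k)))) • p k)
    (hWolfe1 : ∀ k, E (f k + α k • p k) ≤ E (f k) + c₁ * α k * (gradE (f k) ⬝ᵥ p k))
    (hWolfe2 : ∀ k, |gradE (f k + α k • p k) ⬝ᵥ p k| ≤ c₂ * |gradE (f k) ⬝ᵥ p k|) :
    ∀ k,
      ((1 - 2 * c₂) / (1 - c₂)) *
          (Real.sqrt (gradE (f k) ⬝ᵥ M⁻¹.mulVec (gradE (f k))) /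
            Real.sqrt (p k ⬝ᵥ M.mulVec (p k))) ≤
        (-(gradE (f k) ⬝ᵥ p k)) /
          (Real.sqrt (gradE (f k) ⬝ᵥ M⁻¹.mulVec (gradE (f k))) *
            Real.sqrt (p k ⬝ᵥ M.mulVec (p k))) ∧
      (-(gradE (f k) ⬝ᵥ p k)) /
          (Real.sqrt (gradE (f k) ⬝ᵥ M⁻¹.mulVec (gradE (f k))) *
            Real.sqrt (p k ⬝ᵥ M.mulVec (p k))) ≤
        (1 / (1 - c₂)) *
          (Real.sqrt (gradE (f k) ⬝ᵥ M⁻¹.mulVec (gradE (f k))) /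
            Real.sqrt (p k ⬝ᵥ M.mulVec (p k))) :=
  pcg_cos_theta_bounds_general n gradE M hM f p α c₁ c₂ hc₁ hc₁₂ hc₂ hgne hp0 hf hpk hWolfe2
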